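/- For every integer n ≥ 107, one has k_n > 3/4. -/

import Mathlib

/-!
Comparing `sin x` with its degree-five Taylor polynomial gives
`1 / x + 1 / (π - x) - 1 / π ≤ 1 / sin x` on `(0, π)`. Applied at `x = kπ/n` and summed, this yields
`Σ_{k=1}^{n-1} 1 / sin (kπ/n) ≥ (2n H_{n-1} - (n - 1)) / π`, so `k_n > 3/4` as soon as
`2 H_{n-1} - 1 > 3π`, and `H_106 > 5.2129 > (3π + 1) / 2`.
-/

/-- `k_n = (1/(4n)) · Σ_{k=1}^{n-1} 1/sin(kπ/n)` -/
noncomputable def kn (n : ℕ) : ℝ :=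
  (1 / (4 * n)) * ∑ k ∈ Finset.Icc 1 (n - 1), 1 / Real.sin (k * Real.pi / n)

open Real Finset

lemma cos_le_one_sub_sq_div_two_add_pow_four_div {x : ℝ} (hx : 0 ≤ x) :
    cos x ≤ 1 - x ^ 2 / 2 + x ^ 4 / 24 := by
  let f (t : ℝ) : ℝ := 1 - t ^ 2 / 2 + t ^ 4 / 24 - cos t
  have hderiv (t : ℝ) : deriv f t = sin t - (t - t ^ 3 / 6) := by
    simp (disch := fun_prop) [f]
    ring
  have hmono : MonotoneOn f (Set.Ici 0) := by
    refine monotoneOn_of_deriv_nonneg (convex_Ici 0) (by fun_prop) (by fun_prop) fun t ht ↦ ?_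
    rw [interior_Ici] at ht
    simpa [hderiv] using sin_ge_sub_cube (le_of_lt ht)
  have := hmono (by simp) hx hx
  simp only [f, cos_zero] at this
  linarith

lemma sin_le_sub_cube_add_pow_five_div {x : ℝ} (hx : 0 ≤ x) :
    sin x ≤ x - x ^ 3 / 6 + x ^ 5 / 120 := by
  let f (t : ℝ) : ℝ := t - t ^ 3 / 6 + t ^ 5 / 120 - sin t
  have hderiv (t : ℝ) : deriv f t = 1 - t ^ 2 / 2 + t ^ 4 / 24 - cos t := by
    simp (disch := fun_prop) [f]
    ring
  have hmono : MonotoneOn f (Set.Ici 0) := by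
    refine monotoneOn_of_deriv_nonneg (convex_Ici 0) (by fun_prop) (by fun_prop) fun t ht ↦ ?_
    rw [interior_Ici] at ht
    simpa [hderiv] using cos_le_one_sub_sq_div_two_add_pow_four_div (le_of_lt ht)
  have := hmono (by simp) hx hx
  simp only [f, sin_zero] at this
  linarith

lemma one_sub_sq_div_six_add_pow_four_div_le {x : ℝ} (h0 : 0 ≤ x) (h : x ≤ π / 2) :
    1 - x ^ 2 / 6 + x ^ 4 / 120 ≤ π * (π - x) * (1 / 6 - x ^ 2 / 120) := by
  have hπ := pi_gt_d2
  have hπ' := pi_lt_d2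
  have hπsq : 9.8596 < π ^ 2 ∧ π ^ 2 < 9.9225 := ⟨by nlinarith, by nlinarith⟩
  -- after dropping `x ^ 3 (π - x) / 120 ≥ 0` the difference is a quadratic in `x`, decreasing on
  -- `[0, π/2]`, whose value at `π/2` is `π ^ 2 / 8 - π ^ 4 / 480 - 1 ≥ 0`
  have hend : 1 ≤ π ^ 2 / 8 - π ^ 4 / 480 := by
    nlinarith [mul_pos (sub_pos.2 hπsq.1) (sub_pos.2 hπsq.2)]
  have hslope : 0 ≤ π / 6 - (1 / 6 - π ^ 2 / 120) * (x + π / 2) := by nlinarith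
  nlinarith [mul_nonneg (sub_nonneg.2 h) hslope,
    mul_nonneg (pow_nonneg h0 3) (by linarith : 0 ≤ π - x)]

lemma one_div_add_one_div_pi_sub_sub_le_one_div_sin_of_le_pi_div_two {x : ℝ} (h0 : 0 < x)
    (h : x ≤ π / 2) : 1 / x + 1 / (π - x) - 1 / π ≤ 1 / sin x := by
  have hπx : 0 < π - x := by linarith [pi_pos]
  have hsin : 0 < sin x := sin_pos_of_pos_of_lt_pi h0 (by linarith)
  have hq : 0 ≤ π ^ 2 - π * x + x ^ 2 := by nlinarith [sq_nonneg (x - π / 2)]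
  have htaylor := sin_le_sub_cube_add_pow_five_div h0.le
  have hpoly := one_sub_sq_div_six_add_pow_four_div_le h0.le h
  have key : sin x * (π ^ 2 - π * x + x ^ 2) ≤ π * x * (π - x) := by
    nlinarith [mul_le_mul_of_nonneg_right htaylor hq, mul_nonneg (pow_nonneg h0.le 3)
      (sub_nonneg.2 hpoly)]
  rw [show 1 / x + 1 / (π - x) - 1 / π = (π ^ 2 - π * x + x ^ 2) / (π * x * (π - x)) by
    field_simp; ring, div_le_div_iff₀ (by positivity) hsin]
  linarith

lemma one_div_add_one_div_pi_sub_sub_le_one_div_sin {x : ℝ} (h0 : 0 < x) (h : x < π) :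
    1 / x + 1 / (π - x) - 1 / π ≤ 1 / sin x := by
  rcases le_or_gt x (π / 2) with hx | hx
  · exact one_div_add_one_div_pi_sub_sub_le_one_div_sin_of_le_pi_div_two h0 hx
  · have := one_div_add_one_div_pi_sub_sub_le_one_div_sin_of_le_pi_div_two (x := π - x)
      (by linarith) (by linarith)
    rwa [sin_pi_sub, sub_sub_cancel, add_comm (1 / (π - x))] at this

lemma sum_Icc_one_div_sub_eq (n : ℕ) :
    ∑ k ∈ Icc 1 (n - 1), 1 / ((n : ℝ) - k) = ∑ k ∈ Icc 1 (n - 1), 1 / (k : ℝ) := by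
  refine sum_nbij' (n - ·) (n - ·) ?_ ?_ ?_ ?_ ?_ <;> intro k hk <;> rw [mem_Icc] at hk
  · rw [mem_Icc]; omega
  · rw [mem_Icc]; omega
  · omega
  · omega
  · rw [Nat.cast_sub (by omega)]

lemma two_mul_harmonic_sub_div_pi_le_sum_one_div_sin {n : ℕ} (hn : 0 < n) :
    (2 * n * (harmonic (n - 1) : ℝ) - (n - 1)) / π ≤ ∑ k ∈ Icc 1 (n - 1), 1 / sin (k * π / n) := by
  have hn' : (0 : ℝ) < n := by exact_mod_cast hn
  have hterm : ∀ k ∈ Icc 1 (n - 1),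
      n / π * (1 / k + 1 / ((n : ℝ) - k)) - 1 / π ≤ 1 / sin (k * π / n) := by
    intro k hk
    rw [mem_Icc] at hk
    have hk0 : (0 : ℝ) < k := by exact_mod_cast hk.1
    have hkn : (k : ℝ) < n := by exact_mod_cast (show k < n by omega)
    have hnk : (0 : ℝ) < n - k := by linarith
    calc n / π * (1 / k + 1 / ((n : ℝ) - k)) - 1 / π
        = 1 / (k * π / n) + 1 / (π - k * π / n) - 1 / π := by
          rw [show π - k * π / n = (n - k) * π / n by field_simp]
          field_simp
      _ ≤ 1 / sin (k * π / n) :=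
          one_div_add_one_div_pi_sub_sub_le_one_div_sin (by positivity)
            (by rw [div_lt_iff₀ hn']; nlinarith [pi_pos])
  refine le_trans (le_of_eq ?_) (sum_le_sum hterm)
  rw [sum_sub_distrib, ← mul_sum, sum_add_distrib, sum_Icc_one_div_sub_eq, sum_const,
    Nat.card_Icc, Nat.add_sub_cancel, harmonic_eq_sum_Icc, nsmul_eq_mul,
    Nat.cast_sub (R := ℝ) (by omega : 1 ≤ n)]
  push_cast
  simp only [one_div]
  ring

lemma harmonic_mono : Monotone harmonic :=
  monotone_nat_of_le_succ fun n ↦ by rw [harmonic_succ]; exact le_add_of_nonneg_right (by positivity)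

theorem kn_gt_three_quarters (n : ℕ) (hn : 107 ≤ n) : kn n > 3 / 4 := by
  have hn' : (107 : ℝ) ≤ n := by exact_mod_cast hn
  have hH : (52129 / 10000 : ℝ) < harmonic (n - 1) := by
    have h106 : (52129 / 10000 : ℚ) < harmonic 106 := by norm_num [harmonic, sum_range_succ]
    have := Rat.cast_lt (K := ℝ).2 (h106.trans_le (harmonic_mono (show 106 ≤ n - 1 by omega)))
    push_cast at this
    exact this
  have hsum := two_mul_harmonic_sub_div_pi_le_sum_one_div_sin (n := n) (by omega)
  have hπ := pi_lt_d4
  have hmain : 3 * n < (2 * n * (harmonic (n - 1) : ℝ) - (n - 1)) / π := by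
    rw [lt_div_iff₀ pi_pos]
    nlinarith
  rw [kn, gt_iff_lt, show (3 : ℝ) / 4 = 1 / (4 * n) * (3 * n) by field_simp]
  gcongr
  exact hmain.trans_le hsum
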